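/- arXiv:2010.15512 — 3 statements merged into one kernel-verified Lean document; each statement's English description precedes it below -/
import Mathlib

section
/- Mortici's formula is asymptotic to the Gamma function: lim_{x→∞} Γ(x+1) / (√(2πx)·(x/e + 1/(12ex))^x) = 1. -/
/-!
Log-convexity of `Γ` squeezes `Γ(x + 1)` between `n! n^t` and `n! (n + 1)^t`, where `n = ⌊x⌋` and
`t = x - n`, so Stirling's formula for real `x` reduces to Stirling's formula for `n!`.
Passing from `√(2πn) (n/e)^n n^t` to `√(2πx) (x/e)^x` costs the factor
`√(n/x) exp (x log (n/x) + t)`, whose exponent lies in `[-t²/n, 0]`.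
Mortici's formula is Stirling's times `(1 + 1/(12x²))^x`, and `(1 + c/x²)^x → exp 0`.
-/

open Real Filter Topology

namespace Real

theorem Gamma_add_le_Gamma_mul_rpow {a t : ℝ} (ha : 0 < a) (ht₀ : 0 ≤ t) (ht₁ : t ≤ 1) :
    Gamma (a + t) ≤ Gamma a * a ^ t := by
  have hΓ : 0 < Gamma a := Gamma_pos_of_pos ha
  have hconv := convexOn_log_Gamma.2 (Set.mem_Ioi.2 ha) (Set.mem_Ioi.2 (by linarith : 0 < a + 1))
    (sub_nonneg.2 ht₁) ht₀ (by ring)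
  have hlog : log (Gamma (a + t)) ≤ log (Gamma a * a ^ t) := by
    simp only [smul_eq_mul, Function.comp_apply] at hconv
    rw [Gamma_add_one ha.ne', log_mul ha.ne' hΓ.ne', show (1 - t) * a + t * (a + 1) = a + t by ring]
      at hconv
    rw [log_mul hΓ.ne' (rpow_pos_of_pos ha t).ne', log_rpow ha]
    linarith
  exact (log_le_log_iff (Gamma_pos_of_pos (by linarith)) (by positivity)).1 hlog

theorem Gamma_add_one_mul_rpow_le_Gamma_add {a t : ℝ} (ha : 0 < a) (ht₀ : 0 ≤ t) (ht₁ : t ≤ 1) :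
    Gamma (a + 1) * a ^ t ≤ Gamma (a + 1 + t) := by
  have hat : 0 < a + t := by linarith
  have hstep := Gamma_add_le_Gamma_mul_rpow hat (sub_nonneg.2 ht₁) (by linarith)
  rw [show a + t + (1 - t) = a + 1 by ring] at hstep
  calc Gamma (a + 1) * a ^ t
      ≤ Gamma (a + 1) * (a + t) ^ t := by gcongr; linarith
    _ ≤ Gamma (a + t) * (a + t) ^ (1 - t) * (a + t) ^ t := by gcongr
    _ = Gamma (a + 1 + t) := by
      rw [mul_assoc, ← rpow_add hat, sub_add_cancel, rpow_one, mul_comm,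
        ← Gamma_add_one hat.ne', add_right_comm]

theorem Gamma_add_one_div_Gamma_mul_rpow_mem_Icc {x y : ℝ} (hy : 0 < y) (hyx : y ≤ x)
    (hxy : x ≤ y + 1) :
    Gamma (x + 1) / (Gamma (y + 1) * y ^ (x - y)) ∈ Set.Icc 1 (1 + 1 / y) := by
  have ht₀ : 0 ≤ x - y := by linarith
  have ht₁ : x - y ≤ 1 := by linarith
  have hx : x + 1 = y + 1 + (x - y) := by ring
  have hden : 0 < Gamma (y + 1) * y ^ (x - y) := by
    have := Gamma_pos_of_pos (by linarith : 0 < y + 1); positivity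
  constructor
  · rw [one_le_div hden, hx]
    exact Gamma_add_one_mul_rpow_le_Gamma_add hy ht₀ ht₁
  · rw [div_le_iff₀ hden, hx]
    have hΓ : 0 ≤ Gamma (y + 1) := (Gamma_pos_of_pos (by linarith)).le
    calc Gamma (y + 1 + (x - y))
        ≤ Gamma (y + 1) * (y + 1) ^ (x - y) := Gamma_add_le_Gamma_mul_rpow (by linarith) ht₀ ht₁
      _ = Gamma (y + 1) * y ^ (x - y) * (1 + 1 / y) ^ (x - y) := by
        rw [mul_assoc, ← mul_rpow hy.le (by positivity), mul_one_add, mul_one_div_cancel hy.ne']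
      _ ≤ Gamma (y + 1) * y ^ (x - y) * (1 + 1 / y) := by
        gcongr
        exact rpow_le_self_of_one_le (by simp; positivity) ht₁
      _ = (1 + 1 / y) * (Gamma (y + 1) * y ^ (x - y)) := mul_comm _ _

end Real

theorem mul_log_div_add_sub_nonpos {x y : ℝ} (hx : 0 < x) (hy : 0 < y) :
    x * log (y / x) + (x - y) ≤ 0 := by
  have := log_le_sub_one_of_pos (div_pos hy hx)
  have : x * log (y / x) ≤ x * (y / x - 1) := by gcongr
  rw [mul_sub, mul_div_cancel₀ _ hx.ne'] at this
  linarith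

theorem neg_sq_div_le_mul_log_div_add_sub {x y : ℝ} (hx : 0 < x) (hy : 0 < y) :
    -((x - y) ^ 2 / y) ≤ x * log (y / x) + (x - y) := by
  have h := one_sub_inv_le_log_of_pos (div_pos hy hx)
  rw [inv_div] at h
  have : x * (1 - x / y) ≤ x * log (y / x) := by gcongr
  have e : x * (1 - x / y) + (x - y) = -((x - y) ^ 2 / y) := by field_simp; ring
  linarith

noncomputable def stirlingFormula (x : ℝ) : ℝ := √(2 * π * x) * (x / exp 1) ^ x

theorem stirlingFormula_eq {x : ℝ} (hx : 0 < x) :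
    stirlingFormula x = √(2 * π * x) * exp (x * (log x - 1)) := by
  rw [stirlingFormula, rpow_def_of_pos (by positivity), log_div hx.ne' (exp_ne_zero 1), log_exp,
    mul_comm (log x - 1)]

theorem stirlingFormula_pos {x : ℝ} (hx : 0 < x) : 0 < stirlingFormula x := by
  rw [stirlingFormula_eq hx]; positivity

theorem stirlingFormula_mul_rpow_div {x y : ℝ} (hx : 0 < x) (hy : 0 < y) :
    stirlingFormula y * y ^ (x - y) / stirlingFormula x =
      √(y / x) * exp (x * log (y / x) + (x - y)) := by
  rw [stirlingFormula_eq hx, stirlingFormula_eq hy, rpow_def_of_pos hy, log_div hy.ne' hx.ne',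
    sqrt_div' _ hx.le, sqrt_mul (by positivity) y, sqrt_mul (by positivity) x]
  have : 0 < √x := sqrt_pos.2 hx
  have : 0 < √(2 * π) := by positivity
  field_simp
  rw [← exp_add, ← exp_add]
  ring_nf

theorem tendsto_Gamma_nat_add_one_div_stirlingFormula :
    Tendsto (fun n : ℕ => Gamma (n + 1) / stirlingFormula n) atTop (𝓝 1) := by
  have h := (Asymptotics.isEquivalent_iff_tendsto_one
    ((eventually_ne_atTop 0).mono fun n hn => by positivity)).1
    Stirling.factorial_isEquivalent_stirling
  refine h.congr fun n => ?_
  simp only [Pi.div_apply, stirlingFormula, Gamma_nat_eq_factorial, rpow_natCast,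
    mul_right_comm 2 π]

theorem natFloor_bounds_of_one_le {x : ℝ} (hx : 1 ≤ x) :
    1 ≤ (⌊x⌋₊ : ℝ) ∧ (⌊x⌋₊ : ℝ) ≤ x ∧ x ≤ ⌊x⌋₊ + 1 :=
  ⟨mod_cast (Nat.one_le_floor_iff x).2 hx, Nat.floor_le (by linarith), (Nat.lt_floor_add_one x).le⟩

theorem tendsto_one_div_natFloor : Tendsto (fun x : ℝ => 1 / (⌊x⌋₊ : ℝ)) atTop (𝓝 0) :=
  tendsto_one_div_atTop_nhds_zero_nat.comp tendsto_nat_floor_atTop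

theorem tendsto_Gamma_add_one_div_Gamma_natFloor_mul_rpow :
    Tendsto (fun x : ℝ => Gamma (x + 1) / (Gamma (⌊x⌋₊ + 1) * (⌊x⌋₊ : ℝ) ^ (x - ⌊x⌋₊)))
      atTop (𝓝 1) := by
  have hupper : Tendsto (fun x : ℝ => 1 + 1 / (⌊x⌋₊ : ℝ)) atTop (𝓝 1) := by
    simpa using tendsto_one_div_natFloor.const_add 1
  have hbounds : ∀ᶠ x : ℝ in atTop,
      Gamma (x + 1) / (Gamma (⌊x⌋₊ + 1) * (⌊x⌋₊ : ℝ) ^ (x - ⌊x⌋₊)) ∈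
        Set.Icc 1 (1 + 1 / (⌊x⌋₊ : ℝ)) := by
    filter_upwards [eventually_ge_atTop 1] with x hx
    obtain ⟨hn, hnx, hxn⟩ := natFloor_bounds_of_one_le hx
    exact Gamma_add_one_div_Gamma_mul_rpow_mem_Icc (by linarith) hnx hxn
  exact tendsto_of_tendsto_of_tendsto_of_le_of_le' tendsto_const_nhds hupper
    (hbounds.mono fun _ hx => hx.1) (hbounds.mono fun _ hx => hx.2)

theorem tendsto_mul_log_natFloor_div_add_sub :
    Tendsto (fun x : ℝ => x * log (⌊x⌋₊ / x) + (x - ⌊x⌋₊)) atTop (𝓝 0) := by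
  have hlower := tendsto_one_div_natFloor.neg
  rw [neg_zero] at hlower
  refine tendsto_of_tendsto_of_tendsto_of_le_of_le' hlower tendsto_const_nhds ?_ ?_ <;>
    filter_upwards [eventually_ge_atTop 1] with x hx <;>
    obtain ⟨hn, hnx, hxn⟩ := natFloor_bounds_of_one_le hx
  · refine le_trans ?_ (neg_sq_div_le_mul_log_div_add_sub (by linarith) (by linarith))
    gcongr
    nlinarith
  · exact mul_log_div_add_sub_nonpos (by linarith) (by linarith)

theorem tendsto_stirlingFormula_natFloor_mul_rpow_div :
    Tendsto (fun x : ℝ => stirlingFormula ⌊x⌋₊ * (⌊x⌋₊ : ℝ) ^ (x - ⌊x⌋₊) / stirlingFormula x)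
      atTop (𝓝 1) := by
  have h := (tendsto_nat_floor_div_atTop.sqrt).mul
    (tendsto_mul_log_natFloor_div_add_sub.rexp)
  rw [sqrt_one, exp_zero, one_mul] at h
  refine h.congr' ?_
  filter_upwards [eventually_ge_atTop 1] with x hx
  obtain ⟨hn, -, -⟩ := natFloor_bounds_of_one_le hx
  exact (stirlingFormula_mul_rpow_div (by linarith) (by linarith)).symm

theorem tendsto_Gamma_add_one_div_stirlingFormula :
    Tendsto (fun x : ℝ => Gamma (x + 1) / stirlingFormula x) atTop (𝓝 1) := by
  have h := (tendsto_Gamma_add_one_div_Gamma_natFloor_mul_rpow.mul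
    (tendsto_Gamma_nat_add_one_div_stirlingFormula.comp tendsto_nat_floor_atTop)).mul
    tendsto_stirlingFormula_natFloor_mul_rpow_div
  rw [one_mul, one_mul] at h
  refine h.congr' ?_
  filter_upwards [eventually_ge_atTop 1] with x hx
  obtain ⟨hn, -, -⟩ := natFloor_bounds_of_one_le hx
  have := Gamma_pos_of_pos (by linarith : (0 : ℝ) < ⌊x⌋₊ + 1)
  have := stirlingFormula_pos (by linarith : (0 : ℝ) < ⌊x⌋₊)
  have := stirlingFormula_pos (by linarith : (0 : ℝ) < x)
  have := rpow_pos_of_pos (by linarith : (0 : ℝ) < ⌊x⌋₊) (x - ⌊x⌋₊)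
  simp only [Function.comp_apply]
  field_simp

theorem tendsto_one_add_div_sq_rpow (c : ℝ) :
    Tendsto (fun x : ℝ => (1 + c / x ^ 2) ^ x) atTop (𝓝 1) := by
  have h : Tendsto (fun x : ℝ => x * (c / x ^ 2)) atTop (𝓝 0) := by
    refine ((tendsto_const_nhds (x := c)).div_atTop tendsto_id).congr' ?_
    filter_upwards [eventually_ne_atTop 0] with x hx
    rw [id]
    field_simp
  exact exp_zero ▸ tendsto_one_add_rpow_exp_of_tendsto h

theorem stmt_4 :
    Tendsto (fun x : ℝ => Gamma (x + 1) /
      (Real.sqrt (2 * π * x) * (x / exp 1 + 1 / (12 * exp 1 * x)) ^ x)) atTop (nhds 1) := by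
  have h := tendsto_Gamma_add_one_div_stirlingFormula.div (tendsto_one_add_div_sq_rpow (1 / 12))
    one_ne_zero
  rw [div_one] at h
  refine h.congr' ?_
  filter_upwards [eventually_gt_atTop 0] with x hx
  have hsplit : x / exp 1 + 1 / (12 * exp 1 * x) = x / exp 1 * (1 + 1 / 12 / x ^ 2) := by
    field_simp
  rw [Pi.div_apply, hsplit, mul_rpow (by positivity) (by positivity), div_div, stirlingFormula,
    mul_assoc]
end

section
/- Ramanujan's formula is asymptotic to the Gamma function: lim_{x→∞} Γ(x+1) / (√π·(x/e)^x·(8x³ + 4x² + x + 1/30)^(1/6)) = 1. -/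
/-! Log-convexity of `Γ` (Gautschi's inequality) pins `log Γ(n + 1 + t)`, `0 ≤ t ≤ 1`, to within
`1/n` of `log n! + t log n`, and the Stirling approximation `x log (x/e) + ½ log (2x)` moves by
`t log n` up to `O(1/n)` as well; so Stirling's formula for `n!` extends to `Γ(x + 1)` on the reals.
Ramanujan's factor is `(8x³)^(1/6) (1 + O(1/x)) = √(2x) (1 + O(1/x))`.
-/

open Real Filter

open Topology Stirling

noncomputable def logStirlingFun (x : ℝ) : ℝ :=
  log (Gamma (x + 1)) - 1 / 2 * log (2 * x) - x * log (x / exp 1)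

lemma logStirlingFun_natCast (n : ℕ) : logStirlingFun n = log (stirlingSeq n) := by
  rw [log_stirlingSeq_formula, logStirlingFun, Gamma_nat_eq_factorial]

lemma tendsto_logStirlingFun_natCast :
    Tendsto (fun n : ℕ => logStirlingFun n) atTop (𝓝 (log √π)) := by
  simpa only [logStirlingFun_natCast] using tendsto_stirlingSeq_sqrt_pi.log (by positivity)

lemma log_Gamma_nat_add_one_add_bounds {n : ℕ} (hn : n ≠ 0) {t : ℝ} (ht0 : 0 ≤ t) (ht1 : t ≤ 1) :
    log (Gamma (n + 1)) + t * log n ≤ log (Gamma (n + 1 + t)) ∧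
      log (Gamma (n + 1 + t)) ≤ log (Gamma (n + 1)) + t * log (n + 1) := by
  rcases ht0.eq_or_lt with rfl | ht
  · simp
  have hfeq : ∀ {y : ℝ}, 0 < y → (log ∘ Gamma) (y + 1) = (log ∘ Gamma) y + log y := fun hy => by
    simp only [Function.comp, Gamma_add_one hy.ne', log_mul hy.ne' (Gamma_pos_of_pos hy).ne']
    ring
  constructor
  · simpa using BohrMollerup.f_add_nat_ge convexOn_log_Gamma hfeq (n := n + 1) (by omega) ht
  · simpa using BohrMollerup.f_add_nat_le convexOn_log_Gamma hfeq (n := n + 1) n.succ_ne_zero ht ht1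

lemma log_add_sub_log_le {a t : ℝ} (ha : 0 < a) (ht : 0 ≤ t) : log (a + t) - log a ≤ t / a :=
  calc log (a + t) - log a = log ((a + t) / a) := (log_div (by positivity) ha.ne').symm
    _ ≤ (a + t) / a - 1 := log_le_sub_one_of_pos (by positivity)
    _ = t / a := by field_simp; ring

lemma div_add_le_log_add_sub_log {a t : ℝ} (ha : 0 < a) (ht : 0 ≤ t) :
    t / (a + t) ≤ log (a + t) - log a :=
  calc t / (a + t) = 1 - ((a + t) / a)⁻¹ := by field_simp; ring
    _ ≤ log ((a + t) / a) := one_sub_inv_le_log_of_pos (by positivity)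
    _ = log (a + t) - log a := log_div (by positivity) ha.ne'

lemma abs_logStirlingFun_nat_add_sub_le {n : ℕ} (hn : n ≠ 0) {t : ℝ} (ht0 : 0 ≤ t) (ht1 : t ≤ 1) :
    |logStirlingFun (n + t) - logStirlingFun n| ≤ 2 / n := by
  have hn0 : (0 : ℝ) < n := by positivity
  obtain ⟨hA₁, hA₂⟩ := log_Gamma_nat_add_one_add_bounds hn ht0 ht1
  set d := log (n + t) - log n with hd
  have hd₁ : t / (n + t) ≤ d := div_add_le_log_add_sub_log hn0 ht0
  have hd₂ : d ≤ t / n := log_add_sub_log_le hn0 ht0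
  have hlog₁ : log (n + 1) - log n ≤ 1 / n := log_add_sub_log_le hn0 zero_le_one
  have hlog₀ : log n ≤ log (n + 1) := log_le_log hn0 (by linarith)
  have hdiff : logStirlingFun (n + t) - logStirlingFun n =
      (log (Gamma (n + 1 + t)) - log (Gamma (n + 1)) - t * log n) - ((n + t) * d - t) - d / 2 := by
    simp only [logStirlingFun, hd]
    rw [log_mul two_ne_zero (by positivity), log_mul two_ne_zero hn0.ne',
      log_div (by positivity) (exp_ne_zero 1), log_div hn0.ne' (exp_ne_zero 1), log_exp,
      add_right_comm]
    ring
  have hB₁ : t ≤ (n + t) * d := by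
    simpa [mul_div_cancel₀ t (by positivity : (n : ℝ) + t ≠ 0)] using
      mul_le_mul_of_nonneg_left hd₁ (by positivity : (0 : ℝ) ≤ n + t)
  have hB₂ : (n + t) * d ≤ t + 1 / n :=
    calc (n + t) * d ≤ (n + t) * (t / n) := mul_le_mul_of_nonneg_left hd₂ (by positivity)
      _ = t + t * t / n := by field_simp
      _ ≤ t + 1 / n := by gcongr; nlinarith
  have hA : t * log (n + 1) ≤ t * log n + 1 / n := by nlinarith
  have hd₀ : 0 ≤ d := le_trans (by positivity) hd₁
  have hd₃ : d ≤ 1 / n := hd₂.trans (by gcongr)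
  rw [hdiff, abs_le, show (2 : ℝ) / n = 2 * (1 / n) by ring]
  constructor <;> linarith

lemma tendsto_of_tendsto_natCast_of_tendsto_sub_floor {E : Type*} [AddCommGroup E]
    [TopologicalSpace E] [IsTopologicalAddGroup E] {f : ℝ → E} {L : E}
    (hnat : Tendsto (fun n : ℕ => f n) atTop (𝓝 L))
    (hfloor : Tendsto (fun x => f x - f ⌊x⌋₊) atTop (𝓝 0)) : Tendsto f atTop (𝓝 L) := by
  simpa using (hnat.comp tendsto_nat_floor_atTop).add hfloor

lemma tendsto_logStirlingFun : Tendsto logStirlingFun atTop (𝓝 (log √π)) := by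
  refine tendsto_of_tendsto_natCast_of_tendsto_sub_floor tendsto_logStirlingFun_natCast ?_
  refine squeeze_zero_norm' ?_ <|
    ((tendsto_const_nhds (x := (2 : ℝ))).div_atTop tendsto_natCast_atTop_atTop).comp
      tendsto_nat_floor_atTop
  filter_upwards [eventually_ge_atTop 1] with x hx
  have := abs_logStirlingFun_nat_add_sub_le (Nat.floor_pos.2 hx).ne'
    (sub_nonneg.2 (Nat.floor_le (by linarith))) (sub_le_iff_le_add'.2 (Nat.lt_floor_add_one x).le)
  simpa using this

theorem tendsto_Gamma_add_one_div_stirling :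
    Tendsto (fun x => Gamma (x + 1) / (√(2 * x) * (x / exp 1) ^ x)) atTop (𝓝 √π) := by
  have h := tendsto_logStirlingFun.rexp
  rw [exp_log (by positivity)] at h
  refine h.congr' ?_
  filter_upwards [eventually_gt_atTop 0] with x hx
  have hG : 0 < Gamma (x + 1) := Gamma_pos_of_pos (by linarith)
  have hp : 0 < (x / exp 1) ^ x := rpow_pos_of_pos (by positivity) x
  have hlog : logStirlingFun x = log (Gamma (x + 1) / (√(2 * x) * (x / exp 1) ^ x)) := by
    rw [log_div hG.ne' (by positivity), log_mul (by positivity) hp.ne', log_sqrt (by positivity),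
      log_rpow (by positivity), logStirlingFun]
    ring
  rw [hlog, exp_log (by positivity)]

lemma eight_mul_cube_rpow_one_div_six {x : ℝ} (hx : 0 ≤ x) :
    (8 * x ^ 3) ^ ((1 : ℝ) / 6) = √(2 * x) := by
  rw [show 8 * x ^ 3 = (2 * x) ^ (3 : ℝ) by norm_num; ring, ← rpow_mul (by positivity),
    sqrt_eq_rpow]
  norm_num

lemma tendsto_eight_mul_cube_div_rpow_one_div_six : Tendsto (fun x : ℝ =>
    (8 * x ^ 3 / (8 * x ^ 3 + 4 * x ^ 2 + x + 1 / 30)) ^ ((1 : ℝ) / 6)) atTop (𝓝 1) := by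
  have h0 := tendsto_inv_atTop_zero (𝕜 := ℝ)
  have hden := ((tendsto_const_nhds (x := (8 : ℝ))).add (h0.const_mul 4)).add (h0.pow 2) |>.add
    ((h0.pow 3).div_const 30)
  norm_num at hden
  have hbase := (hden.inv₀ (by norm_num)).const_mul 8
  rw [mul_inv_cancel₀ (by norm_num)] at hbase
  have := hbase.rpow_const (p := (1 : ℝ) / 6) (Or.inl one_ne_zero)
  rw [one_rpow] at this
  refine this.congr' ?_
  filter_upwards [eventually_gt_atTop 0] with x hx
  congr 1
  field_simp

theorem stmt_5 :
    Tendsto (fun x : ℝ => Gamma (x + 1) /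
      (Real.sqrt π * (x / exp 1) ^ x *
        (8 * x ^ 3 + 4 * x ^ 2 + x + 1/30) ^ ((1:ℝ)/6))) atTop (nhds 1) := by
  have h := (tendsto_Gamma_add_one_div_stirling.div_const √π).mul
    tendsto_eight_mul_cube_div_rpow_one_div_six
  rw [div_self (by positivity), one_mul] at h
  refine h.congr' ?_
  filter_upwards [eventually_gt_atTop 0] with x hx
  rw [div_rpow (by positivity : (0 : ℝ) ≤ 8 * x ^ 3) (by positivity),
    eight_mul_cube_rpow_one_div_six hx.le]
  have : 0 < (x / exp 1) ^ x := rpow_pos_of_pos (by positivity) x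
  field_simp
end

section
/- Nemes's formula is asymptotic to the Gamma function: lim_{x→∞} Γ(x+1) / (√(2πx)·(x/e)^x·(1 + 1/(12x² - 1/10))^x) = 1. -/
/-!
Stirling's formula `n! ~ √(2πn) (n/e)^n` extends from integers to real `x` through the
log-convexity of `Γ`. With `n = ⌈x⌉₊`, the Bohr–Mollerup bounds place `log Γ(x + 1)` within
`1/(n - 1)` of the linear interpolation `log Γ(n) + (x + 1 - n) log n`. The log of the Stirling
approximation moves by the same linear amount up to `O(1/x)`. Nemes's correction factor tends
to `1` because `x log(1 + 1/(12x² - 1/10)) ≤ x/(12x² - 1/10) → 0`.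
-/

open Real Filter Topology
open scoped Nat

noncomputable def stirlingApprox (x : ℝ) : ℝ := √(2 * π * x) * (x / exp 1) ^ x

lemma stirlingApprox_pos {x : ℝ} (hx : 0 < x) : 0 < stirlingApprox x := by
  unfold stirlingApprox; positivity

lemma log_stirlingApprox {x : ℝ} (hx : 0 < x) :
    log (stirlingApprox x) = (log (2 * π) + log x) / 2 + x * (log x - 1) := by
  rw [stirlingApprox, log_mul (by positivity) (by positivity), log_sqrt (by positivity),
    log_rpow (by positivity), log_div hx.ne' (exp_pos 1).ne', log_exp,
    log_mul (by positivity) hx.ne']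

lemma tendsto_factorial_div_stirlingApprox :
    Tendsto (fun n : ℕ => (n ! : ℝ) / stirlingApprox n) atTop (𝓝 1) := by
  have hpos : ∀ᶠ n : ℕ in atTop, √(2 * n * π) * (n / exp 1) ^ n ≠ 0 := by
    filter_upwards [eventually_gt_atTop 0] with n hn
    positivity
  refine ((Asymptotics.isEquivalent_iff_tendsto_one hpos).1
    Stirling.factorial_isEquivalent_stirling).congr fun n => ?_
  rw [Pi.div_apply, stirlingApprox, rpow_natCast, mul_right_comm]

lemma tendsto_log_factorial_sub_log_stirlingApprox :
    Tendsto (fun n : ℕ => log (n ! : ℝ) - log (stirlingApprox n)) atTop (𝓝 0) := by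
  have := (continuousAt_log one_ne_zero).tendsto.comp tendsto_factorial_div_stirlingApprox
  rw [log_one] at this
  refine this.congr' ?_
  filter_upwards [eventually_gt_atTop 0] with n hn
  exact log_div (by positivity) (stirlingApprox_pos (by exact_mod_cast hn)).ne'

lemma log_Gamma_add_one {y : ℝ} (hy : 0 < y) :
    log (Gamma (y + 1)) = log (Gamma y) + log y := by
  rw [Gamma_add_one hy.ne', log_mul hy.ne' (Gamma_pos_of_pos hy).ne', add_comm]

lemma abs_log_Gamma_nat_add_sub_le {n : ℕ} (hn : 2 ≤ n) {t : ℝ} (ht₀ : 0 < t) (ht₁ : t ≤ 1) :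
    |log (Gamma (n + t)) - log (Gamma n) - t * log n| ≤ 1 / (n - 1) := by
  have hfeq : ∀ {y : ℝ}, 0 < y → (log ∘ Gamma) (y + 1) = (log ∘ Gamma) y + log y :=
    log_Gamma_add_one
  have hle := BohrMollerup.f_add_nat_le (n := n) convexOn_log_Gamma hfeq (by omega) ht₀ ht₁
  have hge := BohrMollerup.f_add_nat_ge convexOn_log_Gamma hfeq hn ht₀
  simp only [Function.comp_apply] at hle hge
  have hn₁ : (1 : ℝ) < n := by exact_mod_cast hn
  have hgap₀ : 0 ≤ log n - log (n - 1) := by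
    linarith [log_le_log (by linarith) (by linarith : (n : ℝ) - 1 ≤ n)]
  have hgap : log n - log (n - 1) ≤ 1 / (n - 1) := by
    rw [← log_div (by positivity) (by linarith)]
    calc log (n / (n - 1)) ≤ n / (n - 1) - 1 := log_le_sub_one_of_pos (by positivity)
      _ = 1 / (n - 1) := by rw [div_sub_one (by linarith), sub_sub_cancel]
  have hgap_t : t * (log n - log (n - 1)) ≤ log n - log (n - 1) :=
    mul_le_of_le_one_left hgap₀ ht₁
  rw [abs_le]
  constructor <;> nlinarith [one_div_pos.2 (by linarith : (0 : ℝ) < n - 1)]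

lemma abs_log_stirlingApprox_sub_le {x y : ℝ} (hx : 0 < x) (hxy : x ≤ y) (hyx : y ≤ x + 1) :
    |log (stirlingApprox y) - log (stirlingApprox x) - (y - x) * log y| ≤ 2 / x := by
  have hy : 0 < y := hx.trans_le hxy
  obtain ⟨L, hL⟩ : ∃ L, L = log y - log x := ⟨_, rfl⟩
  have hL₀ : 0 ≤ L := hL ▸ sub_nonneg.2 (log_le_log hx hxy)
  have hxL : x * L ≤ y - x := by
    have := log_le_sub_one_of_pos (div_pos hy hx)
    rw [log_div hy.ne' hx.ne', ← hL, div_sub_one hx.ne', le_div_iff₀ hx] at this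
    linarith
  have hyL : y - x ≤ y * L := by
    rw [hL]
    have := log_le_sub_one_of_pos (div_pos hx hy)
    rw [log_div hx.ne' hy.ne', div_sub_one hy.ne', le_div_iff₀ hy] at this
    linarith
  have hL_le : L ≤ 1 / x := by rw [le_div_iff₀ hx]; linarith
  have hgapL : (y - x) * L ≤ L := mul_le_of_le_one_left hL₀ (by linarith)
  have hexpand : log (stirlingApprox y) - log (stirlingApprox x) - (y - x) * log y
      = L / 2 + x * L - (y - x) := by
    rw [log_stirlingApprox hx, log_stirlingApprox hy, hL]; ring
  have htwo : 2 / x = 2 * (1 / x) := by ring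
  rw [hexpand, abs_le]
  constructor <;> linarith [one_div_pos.2 hx]

lemma tendsto_log_Gamma_add_one_sub_log_stirlingApprox :
    Tendsto (fun x => log (Gamma (x + 1)) - log (stirlingApprox x)) atTop (𝓝 0) := by
  have htwo_div : Tendsto (fun x : ℝ => 2 / x) atTop (𝓝 0) :=
    tendsto_const_nhds.div_atTop tendsto_id
  have hinterp : Tendsto (fun x : ℝ => log (Gamma (x + 1)) - log (Gamma ⌈x⌉₊)
      - (x + 1 - ⌈x⌉₊) * log ⌈x⌉₊) atTop (𝓝 0) := by
    refine squeeze_zero_norm' ?_ htwo_div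
    filter_upwards [eventually_ge_atTop 2] with x hx
    have hxn : x ≤ ⌈x⌉₊ := Nat.le_ceil x
    have hnx : (⌈x⌉₊ : ℝ) < x + 1 := Nat.ceil_lt_add_one (by linarith)
    have hn : 2 ≤ ⌈x⌉₊ := by exact_mod_cast hx.trans hxn
    have h := abs_log_Gamma_nat_add_sub_le hn (t := x + 1 - ⌈x⌉₊) (by linarith) (by linarith)
    rw [add_sub_cancel] at h
    rw [norm_eq_abs]
    refine h.trans ?_
    rw [div_le_div_iff₀ (by linarith) (by linarith)]
    linarith
  have happrox : Tendsto (fun x : ℝ => log (stirlingApprox ⌈x⌉₊) - log (stirlingApprox x)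
      - (⌈x⌉₊ - x) * log ⌈x⌉₊) atTop (𝓝 0) := by
    refine squeeze_zero_norm' ?_ htwo_div
    filter_upwards [eventually_gt_atTop 0] with x hx
    rw [norm_eq_abs]
    exact abs_log_stirlingApprox_sub_le hx (Nat.le_ceil x) (Nat.ceil_lt_add_one hx.le).le
  have hsum := ((tendsto_log_factorial_sub_log_stirlingApprox.comp
    tendsto_nat_ceil_atTop).add hinterp).add happrox
  rw [add_zero, add_zero] at hsum
  refine hsum.congr' ?_
  filter_upwards [eventually_gt_atTop 0] with x hx
  have hn : (0 : ℝ) < ⌈x⌉₊ := hx.trans_le (Nat.le_ceil x)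
  have hfac : log (⌈x⌉₊ ! : ℝ) = log (Gamma ⌈x⌉₊) + log ⌈x⌉₊ := by
    rw [← log_Gamma_add_one hn, Gamma_nat_eq_factorial]
  simp only [Function.comp_apply]
  rw [hfac]
  ring

lemma tendsto_Gamma_add_one_div_stirlingApprox :
    Tendsto (fun x => Gamma (x + 1) / stirlingApprox x) atTop (𝓝 1) := by
  have := (continuous_exp.tendsto 0).comp tendsto_log_Gamma_add_one_sub_log_stirlingApprox
  rw [exp_zero] at this
  refine this.congr' ?_
  filter_upwards [eventually_gt_atTop 0] with x hx
  rw [Function.comp_apply, exp_sub, exp_log (Gamma_pos_of_pos (by linarith)),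
    exp_log (stirlingApprox_pos hx)]

lemma tendsto_one_add_rpow_self {u : ℝ → ℝ} (hu : ∀ᶠ x in atTop, 0 ≤ u x)
    (hxu : Tendsto (fun x => x * u x) atTop (𝓝 0)) :
    Tendsto (fun x => (1 + u x) ^ x) atTop (𝓝 1) := by
  have hlog : Tendsto (fun x => x * log (1 + u x)) atTop (𝓝 0) := by
    refine tendsto_of_tendsto_of_tendsto_of_le_of_le' tendsto_const_nhds hxu ?_ ?_ <;>
      filter_upwards [hu, eventually_ge_atTop 0] with x hux hx
    · exact mul_nonneg hx (log_nonneg (by linarith))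
    · exact mul_le_mul_of_nonneg_left
        (by linarith [log_le_sub_one_of_pos (by linarith : 0 < 1 + u x)]) hx
  have := (continuous_exp.tendsto 0).comp hlog
  rw [exp_zero] at this
  refine this.congr' ?_
  filter_upwards [hu] with x hux
  rw [Function.comp_apply, rpow_def_of_pos (by linarith), mul_comm]

lemma tendsto_mul_one_div_twelve_mul_sq_sub :
    Tendsto (fun x : ℝ => x * (1 / (12 * x ^ 2 - 1 / 10))) atTop (𝓝 0) := by
  have hden : Tendsto (fun x : ℝ => 12 * x - 1 / 10 * x⁻¹) atTop atTop :=
    (tendsto_id.const_mul_atTop (by norm_num)).atTop_add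
      ((tendsto_inv_atTop_zero.const_mul _).neg)
  refine (tendsto_inv_atTop_zero.comp hden).congr' ?_
  filter_upwards [eventually_gt_atTop 0] with x hx
  rw [Function.comp_apply]
  field_simp

theorem stmt_6 :
    Tendsto (fun x : ℝ => Gamma (x + 1) /
      (Real.sqrt (2 * π * x) * (x / exp 1) ^ x *
        (1 + 1 / (12 * x ^ 2 - 1/10)) ^ x)) atTop (nhds 1) := by
  have hnonneg : ∀ᶠ x : ℝ in atTop, 0 ≤ 1 / (12 * x ^ 2 - 1 / 10) := by
    filter_upwards [eventually_ge_atTop 1] with x hx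
    have : 0 < 12 * x ^ 2 - 1 / 10 := by nlinarith
    positivity
  have h := tendsto_Gamma_add_one_div_stirlingApprox.div
    (tendsto_one_add_rpow_self hnonneg tendsto_mul_one_div_twelve_mul_sq_sub) one_ne_zero
  rw [div_one] at h
  exact h.congr fun x => div_div _ _ _
end
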